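/- Let a < b be real numbers and let f_1, f_2 : [a,b] × ℝ × ℝ → ℝ be continuous with continuous partial derivatives f_{1y}, f_{1v}, f_{2y}, f_{2v} with respect to their second and third arguments. Suppose x̃ : [a,b] → ℝ is C¹ with x̃(a) = x_a and x̃(b) = x_b, that the maps t ↦ f_{1v}(t, x̃(t), x̃'(t)) and t ↦ f_{2v}(t, x̃(t), x̃'(t)) are differentiable on [a,b], and that x̃ is a weak local extremizer of the product functional L[x] = F_1[x] · F_2[x] among admissible functions: there exists δ > 0 such that L[x̃] ≤ L[x] for every C¹ function x with x(a) = x_a, x(b) = x_b and ‖x − x̃‖₁ < δ (or L[x̃] ≥ L[x] for all such x). Then for all t ∈ [a,b]: F_2[x̃] · ( f_{1y}(t, x̃(t), x̃'(t)) − (d/dt) f_{1v}(t, x̃(t), x̃'(t)) ) + F_1[x̃] · ( f_{2y}(t, x̃(t), x̃'(t)) − (d/dt) f_{2v}(t, x̃(t), x̃'(t)) ) = 0. -/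

import Mathlib

/-- The C¹-norm ‖x‖₁ = sup_{t∈[a,b]} |x(t)| + sup_{t∈[a,b]} |x'(t)|. -/
noncomputable def C1Norm (a b : ℝ) (x : ℝ → ℝ) : ℝ :=
  (⨆ t : Set.Icc a b, |x t|) + (⨆ t : Set.Icc a b, |derivWithin x (Set.Icc a b) t|)

/-!
Perturb `x̃` by `ε η` with `η` of class C¹ vanishing at `a` and `b`. Since `‖ε η‖₁ = |ε| ‖η‖₁`,
the function `ε ↦ L[x̃ + ε η] = F₁ F₂` has a local extremum at `0`. Differentiating under the
integral sign, its derivative there is the first variation of the single Lagrangian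
`g = F₂[x̃] f₁ + F₁[x̃] f₂`, which therefore vanishes in every admissible direction. By the
du Bois-Reymond lemma (if `∫ h η' = 0` for all such `η` then `h` is constant), applied to
`h = g_v - ∫ₐᵗ g_y`, this gives `d/dt g_v = g_y` along `x̃` on all of `[a, b]`, which is the
claimed equation.
-/

open Set Filter Topology MeasureTheory

theorem ContinuousOn.comp_curve {X α β γ δ : Type*} [TopologicalSpace X] [TopologicalSpace α]
    [TopologicalSpace β] [TopologicalSpace γ] [TopologicalSpace δ] {g : α → β → γ → δ}
    {s : Set α} (hg : ContinuousOn (fun p : α × β × γ => g p.1 p.2.1 p.2.2) (s ×ˢ univ ×ˢ univ))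
    {K : Set X} {τ : X → α} {y : X → β} {v : X → γ} (hτ : ContinuousOn τ K) (hτK : MapsTo τ K s)
    (hy : ContinuousOn y K) (hv : ContinuousOn v K) :
    ContinuousOn (fun p => g (τ p) (y p) (v p)) K :=
  hg.comp (hτ.prodMk (hy.prodMk hv)) fun _ hp => ⟨hτK hp, trivial, trivial⟩

theorem hasDerivAt_comp₂_of_partials {g gy gv : ℝ → ℝ → ℝ} {u w : ℝ → ℝ} {u' w' s : ℝ}
    (hgy : ∀ y v, HasDerivAt (g · v) (gy y v) y) (hgv : ∀ y v, HasDerivAt (g y ·) (gv y v) v)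
    (hcy : ContinuousAt (fun p : ℝ × ℝ => gy p.1 p.2) (u s, w s))
    (hcv : ContinuousAt (fun p : ℝ × ℝ => gv p.1 p.2) (u s, w s))
    (hu : HasDerivAt u u' s) (hw : HasDerivAt w w' s) :
    HasDerivAt (fun s => g (u s) (w s)) (gy (u s) (w s) * u' + gv (u s) (w s) * w') s := by
  have hg := hasStrictFDerivAt_uncurry_coprod (𝕜 := ℝ) (u := (u s, w s)) (f := g)
    (f₁ := fun y v => ContinuousLinearMap.toSpanSingleton ℝ (gy y v))
    (f₂ := fun y v => ContinuousLinearMap.toSpanSingleton ℝ (gv y v))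
    (.of_forall fun p => (hgy p.1 p.2).hasFDerivAt) (.of_forall fun p => (hgv p.1 p.2).hasFDerivAt)
    ((ContinuousLinearMap.toSpanSingletonCLE (𝕜 := ℝ) (E := ℝ)).continuous.continuousAt.comp hcy)
    ((ContinuousLinearMap.toSpanSingletonCLE (𝕜 := ℝ) (E := ℝ)).continuous.continuousAt.comp hcv)
  refine (hg.hasFDerivAt.comp_hasDerivAt s (hu.prodMk hw)).congr_deriv ?_
  simp [Function.HasUncurry.uncurry, mul_comm]

section

variable {a b : ℝ}

theorem ContinuousOn.integral_hasDerivWithinAt_Icc {g : ℝ → ℝ} (hg : ContinuousOn g (Icc a b))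
    {t : ℝ} (ht : t ∈ Icc a b) :
    HasDerivWithinAt (fun u => ∫ s in a..u, g s) (g t) (Icc a b) t :=
  have : Fact (t ∈ Icc a b) := ⟨ht⟩
  intervalIntegral.integral_hasDerivWithinAt_right
    ((hg.mono (Icc_subset_Icc_right ht.2)).intervalIntegrable_of_Icc ht.1)
    (hg.stronglyMeasurableAtFilter_nhdsWithin measurableSet_Icc t) (hg t ht)

theorem ContinuousOn.derivWithin_integral_Icc (hab : a < b) {g : ℝ → ℝ}
    (hg : ContinuousOn g (Icc a b)) :
    EqOn (derivWithin (fun u => ∫ s in a..u, g s) (Icc a b)) g (Icc a b) :=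
  fun _ ht => (hg.integral_hasDerivWithinAt_Icc ht).derivWithin (uniqueDiffOn_Icc hab _ ht)

theorem ContinuousOn.contDiffOn_integral_Icc (hab : a < b) {g : ℝ → ℝ}
    (hg : ContinuousOn g (Icc a b)) : ContDiffOn ℝ 1 (fun u => ∫ s in a..u, g s) (Icc a b) :=
  (contDiffOn_one_iff_derivWithin (uniqueDiffOn_Icc hab)).2
    ⟨fun _ ht => (hg.integral_hasDerivWithinAt_Icc ht).differentiableWithinAt,
      hg.congr (hg.derivWithin_integral_Icc hab)⟩

theorem ContinuousOn.eqOn_zero_of_integral_eq_zero (hab : a < b) {g : ℝ → ℝ}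
    (hg : ContinuousOn g (Icc a b)) (hg₀ : ∀ t ∈ Icc a b, 0 ≤ g t) (h : ∫ t in a..b, g t = 0) :
    EqOn g 0 (Icc a b) := by
  rw [intervalIntegral.integral_of_le hab.le, ← integral_Icc_eq_integral_Ioc,
    setIntegral_eq_zero_iff_of_nonneg_ae ((ae_restrict_iff' measurableSet_Icc).2 (.of_forall hg₀))
      (hg.integrableOn_compact isCompact_Icc)] at h
  exact Measure.eqOn_Icc_of_ae_eq volume hab.ne h hg continuousOn_const

/-- The du Bois-Reymond lemma. -/
theorem ContinuousOn.exists_eqOn_const_of_integral_mul_derivWithin_eq_zero (hab : a < b)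
    {h : ℝ → ℝ} (hh : ContinuousOn h (Icc a b))
    (H : ∀ η : ℝ → ℝ, ContDiffOn ℝ 1 η (Icc a b) → η a = 0 → η b = 0 →
      ∫ t in a..b, h t * derivWithin η (Icc a b) t = 0) :
    ∃ c, EqOn h (fun _ => c) (Icc a b) := by
  set c := (∫ t in a..b, h t) / (b - a)
  have hhc : ContinuousOn (fun t => h t - c) (Icc a b) := hh.sub continuousOn_const
  have hmean : ∫ t in a..b, (h t - c) = 0 := by
    rw [intervalIntegral.integral_sub (hh.intervalIntegrable_of_Icc hab.le)
      intervalIntegrable_const, intervalIntegral.integral_const, smul_eq_mul,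
      mul_div_cancel₀ _ (sub_ne_zero.2 hab.ne'), sub_self]
  -- test against the primitive of `h - c`, which vanishes at both ends by the choice of `c`
  have hη : ∫ t in a..b, h t * (h t - c) = 0 := by
    rw [← H _ (hhc.contDiffOn_integral_Icc hab) intervalIntegral.integral_same hmean]
    refine intervalIntegral.integral_congr fun t ht => ?_
    rw [uIcc_of_le hab.le] at ht
    simp only [hhc.derivWithin_integral_Icc hab ht]
  have hsq : ∫ t in a..b, (h t - c) ^ 2 = 0 := by
    calc ∫ t in a..b, (h t - c) ^ 2 = ∫ t in a..b, (h t * (h t - c) - c * (h t - c)) :=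
          intervalIntegral.integral_congr fun t _ => by ring
      _ = 0 := by
          rw [intervalIntegral.integral_sub
            (ContinuousOn.intervalIntegrable_of_Icc (u := fun t => h t * (h t - c)) hab.le
              (hh.mul hhc))
            ((hhc.intervalIntegrable_of_Icc hab.le).const_mul c), hη,
            intervalIntegral.integral_const_mul, hmean, mul_zero, sub_zero]
  refine ⟨c, fun t ht => sub_eq_zero.1 ?_⟩
  exact pow_eq_zero_iff two_ne_zero |>.1 <|
    (hhc.pow 2).eqOn_zero_of_integral_eq_zero hab (fun t _ => sq_nonneg _) hsq ht

theorem ContinuousOn.hasDerivWithinAt_of_integral_mul_add_mul_derivWithin_eq_zero (hab : a < b)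
    {P Q : ℝ → ℝ} (hP : ContinuousOn P (Icc a b)) (hQ : ContinuousOn Q (Icc a b))
    (H : ∀ η : ℝ → ℝ, ContDiffOn ℝ 1 η (Icc a b) → η a = 0 → η b = 0 →
      ∫ t in a..b, (P t * η t + Q t * derivWithin η (Icc a b) t) = 0) :
    ∀ t ∈ Icc a b, HasDerivWithinAt Q (P t) (Icc a b) t := by
  set A := fun u => ∫ s in a..u, P s
  have hA : ∀ t ∈ Icc a b, HasDerivWithinAt A (P t) (Icc a b) t :=
    fun t ht => hP.integral_hasDerivWithinAt_Icc ht
  have hAc : ContinuousOn A (Icc a b) := (hP.contDiffOn_integral_Icc hab).continuousOn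
  obtain ⟨c, hc⟩ := (hQ.sub hAc).exists_eqOn_const_of_integral_mul_derivWithin_eq_zero hab
    fun η hη hηa hηb => by
      have hη' : ∀ t ∈ Icc a b, HasDerivWithinAt η (derivWithin η (Icc a b) t) (Icc a b) t :=
        fun t ht => (hη.differentiableOn one_ne_zero t ht).hasDerivWithinAt
      have hη'c := hη.continuousOn_derivWithin (uniqueDiffOn_Icc hab) le_rfl
      have hparts : ∫ t in a..b, (P t * η t + A t * derivWithin η (Icc a b) t) = 0 := by
        rw [intervalIntegral.integral_deriv_mul_eq_sub_of_hasDerivWithinAt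
          (by rwa [uIcc_of_le hab.le]) (by rwa [uIcc_of_le hab.le])
          (hP.intervalIntegrable_of_Icc hab.le) (hη'c.intervalIntegrable_of_Icc hab.le),
          hηa, hηb, mul_zero, mul_zero, sub_zero]
      have hPQ := ContinuousOn.intervalIntegrable_of_Icc (μ := volume)
        (u := fun t => P t * η t + Q t * derivWithin η (Icc a b) t) hab.le
        ((hP.mul hη.continuousOn).add (hQ.mul hη'c))
      have hPA := ContinuousOn.intervalIntegrable_of_Icc (μ := volume)
        (u := fun t => P t * η t + A t * derivWithin η (Icc a b) t) hab.le
        ((hP.mul hη.continuousOn).add (hAc.mul hη'c))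
      calc ∫ t in a..b, (Q - A) t * derivWithin η (Icc a b) t
          = (∫ t in a..b, (P t * η t + Q t * derivWithin η (Icc a b) t)) -
              ∫ t in a..b, (P t * η t + A t * derivWithin η (Icc a b) t) := by
            rw [← intervalIntegral.integral_sub hPQ hPA]
            exact intervalIntegral.integral_congr fun t _ => by simp only [Pi.sub_apply]; ring
        _ = 0 := by rw [H η hη hηa hηb, hparts, sub_zero]
  exact fun t ht => ((hA t ht).add_const c).congr (fun s hs => sub_eq_iff_eq_add'.1 (hc hs))
    (sub_eq_iff_eq_add'.1 (hc ht))

theorem C1Norm_const_mul (c : ℝ) (x : ℝ → ℝ) :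
    C1Norm a b (fun t => c * x t) = |c| * C1Norm a b x := by
  simp only [C1Norm, derivWithin_const_mul_field, abs_mul, mul_add,
    Real.mul_iSup_of_nonneg (abs_nonneg c)]

theorem isLocalExtr_comp_add_mul {L : (ℝ → ℝ) → ℝ} {x η : ℝ → ℝ}
    (hx : ContDiffOn ℝ 1 x (Icc a b)) (hη : ContDiffOn ℝ 1 η (Icc a b))
    (hηa : η a = 0) (hηb : η b = 0)
    (hext :
      (∃ δ > 0, ∀ y : ℝ → ℝ, ContDiffOn ℝ 1 y (Icc a b) → y a = x a → y b = x b →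
        C1Norm a b (fun t => y t - x t) < δ → L x ≤ L y) ∨
      (∃ δ > 0, ∀ y : ℝ → ℝ, ContDiffOn ℝ 1 y (Icc a b) → y a = x a → y b = x b →
        C1Norm a b (fun t => y t - x t) < δ → L y ≤ L x)) :
    IsLocalExtr (fun ε => L (fun t => x t + ε * η t)) 0 := by
  have hnear : ∀ δ > 0, ∀ᶠ ε in 𝓝 (0 : ℝ),
      ContDiffOn ℝ 1 (fun t => x t + ε * η t) (Icc a b) ∧ x a + ε * η a = x a ∧
        x b + ε * η b = x b ∧ C1Norm a b (fun t => x t + ε * η t - x t) < δ := by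
    intro δ hδ
    have hsmall : Tendsto (fun ε : ℝ => |ε| * C1Norm a b η) (𝓝 0) (𝓝 0) :=
      (continuous_abs.mul continuous_const).tendsto' 0 0 (by simp)
    filter_upwards [hsmall.eventually_lt_const hδ] with ε hε
    refine ⟨hx.add (contDiffOn_const.mul hη), by simp [hηa], by simp [hηb], ?_⟩
    simpa only [add_sub_cancel_left, C1Norm_const_mul] using hε
  have h0 : (fun t => x t + 0 * η t) = x := by simp
  rcases hext with ⟨δ, hδ, hmin⟩ | ⟨δ, hδ, hmax⟩
  · refine .inl ?_
    filter_upwards [hnear δ hδ] with ε ⟨hC1, ha, hb, hε⟩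
    simpa only [h0] using hmin _ hC1 ha hb hε
  · refine .inr ?_
    filter_upwards [hnear δ hδ] with ε ⟨hC1, ha, hb, hε⟩
    simpa only [h0] using hmax _ hC1 ha hb hε

end

structure IsC1Lagrangian (a b : ℝ) (f fy fv : ℝ → ℝ → ℝ → ℝ) : Prop where
  continuousOn : ContinuousOn (fun p : ℝ × ℝ × ℝ => f p.1 p.2.1 p.2.2) (Icc a b ×ˢ univ ×ˢ univ)
  hasDerivAt_y : ∀ t ∈ Icc a b, ∀ y v, HasDerivAt (f t · v) (fy t y v) y
  hasDerivAt_v : ∀ t ∈ Icc a b, ∀ y v, HasDerivAt (f t y ·) (fv t y v) v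
  continuousOn_y : ContinuousOn (fun p : ℝ × ℝ × ℝ => fy p.1 p.2.1 p.2.2) (Icc a b ×ˢ univ ×ˢ univ)
  continuousOn_v : ContinuousOn (fun p : ℝ × ℝ × ℝ => fv p.1 p.2.1 p.2.2) (Icc a b ×ˢ univ ×ˢ univ)

noncomputable def action (a b : ℝ) (f : ℝ → ℝ → ℝ → ℝ) (x : ℝ → ℝ) : ℝ :=
  ∫ t in a..b, f t (x t) (derivWithin x (Icc a b) t)

noncomputable def firstVariation (a b : ℝ) (fy fv : ℝ → ℝ → ℝ → ℝ) (x η : ℝ → ℝ) : ℝ :=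
  ∫ t in a..b, fy t (x t) (derivWithin x (Icc a b) t) * η t +
    fv t (x t) (derivWithin x (Icc a b) t) * derivWithin η (Icc a b) t

namespace IsC1Lagrangian

variable {a b : ℝ} {f fy fv f₁ f₁y f₁v f₂ f₂y f₂v : ℝ → ℝ → ℝ → ℝ} {x η : ℝ → ℝ}

theorem const_mul_add (h₁ : IsC1Lagrangian a b f₁ f₁y f₁v) (h₂ : IsC1Lagrangian a b f₂ f₂y f₂v)
    (c₁ c₂ : ℝ) :
    IsC1Lagrangian a b (fun t y v => c₁ * f₁ t y v + c₂ * f₂ t y v)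
      (fun t y v => c₁ * f₁y t y v + c₂ * f₂y t y v)
      (fun t y v => c₁ * f₁v t y v + c₂ * f₂v t y v) where
  continuousOn :=
    (continuousOn_const.mul h₁.continuousOn).add (continuousOn_const.mul h₂.continuousOn)
  hasDerivAt_y t ht y v :=
    ((h₁.hasDerivAt_y t ht y v).const_mul c₁).add ((h₂.hasDerivAt_y t ht y v).const_mul c₂)
  hasDerivAt_v t ht y v :=
    ((h₁.hasDerivAt_v t ht y v).const_mul c₁).add ((h₂.hasDerivAt_v t ht y v).const_mul c₂)
  continuousOn_y :=
    (continuousOn_const.mul h₁.continuousOn_y).add (continuousOn_const.mul h₂.continuousOn_y)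
  continuousOn_v :=
    (continuousOn_const.mul h₁.continuousOn_v).add (continuousOn_const.mul h₂.continuousOn_v)

theorem hasDerivAt_comp_add_mul (hf : IsC1Lagrangian a b f fy fv) {t : ℝ} (ht : t ∈ Icc a b)
    (y v η ζ ε : ℝ) :
    HasDerivAt (fun ε => f t (y + ε * η) (v + ε * ζ))
      (fy t (y + ε * η) (v + ε * ζ) * η + fv t (y + ε * η) (v + ε * ζ) * ζ) ε := by
  have hslice : ∀ {g : ℝ → ℝ → ℝ → ℝ},
      ContinuousOn (fun p : ℝ × ℝ × ℝ => g p.1 p.2.1 p.2.2) (Icc a b ×ˢ univ ×ˢ univ) →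
      Continuous (fun p : ℝ × ℝ => g t p.1 p.2) := fun hg =>
    continuousOn_univ.1 <| hg.comp_curve continuousOn_const (fun _ _ => ht)
      continuous_fst.continuousOn continuous_snd.continuousOn
  simpa using hasDerivAt_comp₂_of_partials (hf.hasDerivAt_y t ht) (hf.hasDerivAt_v t ht)
    (hslice hf.continuousOn_y).continuousAt (hslice hf.continuousOn_v).continuousAt
    ((hasDerivAt_mul_const η).const_add y) ((hasDerivAt_mul_const ζ).const_add v)

theorem hasDerivAt_integral_add_mul (hf : IsC1Lagrangian a b f fy fv) (hab : a ≤ b)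
    {y v η ζ : ℝ → ℝ} (hy : ContinuousOn y (Icc a b)) (hv : ContinuousOn v (Icc a b))
    (hη : ContinuousOn η (Icc a b)) (hζ : ContinuousOn ζ (Icc a b)) :
    HasDerivAt (fun ε => ∫ t in a..b, f t (y t + ε * η t) (v t + ε * ζ t))
      (∫ t in a..b, fy t (y t) (v t) * η t + fv t (y t) (v t) * ζ t) 0 := by
  set K := Icc (-1 : ℝ) 1 ×ˢ Icc a b
  have hsnd : MapsTo Prod.snd K (Icc a b) := fun p hp => hp.2
  have hY : ContinuousOn (fun p : ℝ × ℝ => y p.2 + p.1 * η p.2) K :=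
    (hy.comp continuousOn_snd hsnd).add (continuousOn_fst.mul (hη.comp continuousOn_snd hsnd))
  have hV : ContinuousOn (fun p : ℝ × ℝ => v p.2 + p.1 * ζ p.2) K :=
    (hv.comp continuousOn_snd hsnd).add (continuousOn_fst.mul (hζ.comp continuousOn_snd hsnd))
  have hF := hf.continuousOn.comp_curve continuousOn_snd hsnd hY hV
  have hF' := ((hf.continuousOn_y.comp_curve continuousOn_snd hsnd hY hV).mul
    (hη.comp continuousOn_snd hsnd)).add
    ((hf.continuousOn_v.comp_curve continuousOn_snd hsnd hY hV).mul (hζ.comp continuousOn_snd hsnd))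
  obtain ⟨C, hC⟩ := (isCompact_Icc.prod isCompact_Icc).exists_bound_of_continuousOn hF'
  have hIoc : uIoc a b ⊆ Icc a b := by
    rw [uIoc_of_le hab]
    exact Ioc_subset_Icc_self
  have hslice : ∀ {φ : ℝ × ℝ → ℝ}, ContinuousOn φ K → ∀ ε ∈ Icc (-1 : ℝ) 1,
      ContinuousOn (fun t => φ (ε, t)) (Icc a b) := fun hφ ε hε =>
    hφ.comp (continuousOn_const.prodMk continuousOn_id) fun t ht => ⟨hε, ht⟩
  have h0 : (0 : ℝ) ∈ Icc (-1 : ℝ) 1 := by norm_num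
  have hmem : Icc (-1 : ℝ) 1 ∈ 𝓝 0 := Icc_mem_nhds (by norm_num) (by norm_num)
  have := intervalIntegral.hasDerivAt_integral_of_dominated_loc_of_deriv_le
    (μ := volume) (bound := fun _ => C) hmem
    (eventually_of_mem hmem fun ε hε =>
      ((hslice hF ε hε).mono hIoc).aestronglyMeasurable measurableSet_uIoc)
    ((hslice hF 0 h0).intervalIntegrable_of_Icc hab)
    (((hslice hF' 0 h0).mono hIoc).aestronglyMeasurable measurableSet_uIoc)
    (.of_forall fun t ht ε hε => hC (ε, t) ⟨hε, hIoc ht⟩) intervalIntegrable_const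
    (.of_forall fun t ht ε _ => hf.hasDerivAt_comp_add_mul (hIoc ht) (y t) (v t) (η t) (ζ t) ε)
  simpa using this.2

theorem hasDerivAt_action_add_mul (hf : IsC1Lagrangian a b f fy fv) (hab : a < b)
    (hx : ContDiffOn ℝ 1 x (Icc a b)) (hη : ContDiffOn ℝ 1 η (Icc a b)) :
    HasDerivAt (fun ε => action a b f (fun t => x t + ε * η t))
      (firstVariation a b fy fv x η) 0 := by
  have hI := uniqueDiffOn_Icc hab
  refine (hf.hasDerivAt_integral_add_mul hab.le hx.continuousOn
    (hx.continuousOn_derivWithin hI le_rfl) hη.continuousOn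
    (hη.continuousOn_derivWithin hI le_rfl)).congr_of_eventuallyEq (.of_forall fun ε => ?_)
  refine intervalIntegral.integral_congr fun t ht => ?_
  rw [uIcc_of_le hab.le] at ht
  simp only
  rw [derivWithin_fun_add (hx.differentiableOn one_ne_zero t ht)
    ((hη.differentiableOn one_ne_zero t ht).const_mul ε), derivWithin_const_mul_field]

theorem intervalIntegrable_firstVariation (hf : IsC1Lagrangian a b f fy fv) (hab : a < b)
    (hx : ContDiffOn ℝ 1 x (Icc a b)) (hη : ContDiffOn ℝ 1 η (Icc a b)) :
    IntervalIntegrable (fun t => fy t (x t) (derivWithin x (Icc a b) t) * η t +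
      fv t (x t) (derivWithin x (Icc a b) t) * derivWithin η (Icc a b) t) volume a b :=
  have hx' := hx.continuousOn_derivWithin (uniqueDiffOn_Icc hab) le_rfl
  ContinuousOn.intervalIntegrable_of_Icc hab.le <|
    ((hf.continuousOn_y.comp_curve continuousOn_id (mapsTo_id _) hx.continuousOn hx').mul
      hη.continuousOn).add
    ((hf.continuousOn_v.comp_curve continuousOn_id (mapsTo_id _) hx.continuousOn hx').mul
      (hη.continuousOn_derivWithin (uniqueDiffOn_Icc hab) le_rfl))

theorem hasDerivAt_action_mul_action (h₁ : IsC1Lagrangian a b f₁ f₁y f₁v)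
    (h₂ : IsC1Lagrangian a b f₂ f₂y f₂v) (hab : a < b)
    (hx : ContDiffOn ℝ 1 x (Icc a b)) (hη : ContDiffOn ℝ 1 η (Icc a b)) :
    HasDerivAt
      (fun ε => action a b f₁ (fun t => x t + ε * η t) * action a b f₂ (fun t => x t + ε * η t))
      (firstVariation a b
        (fun t y v => action a b f₂ x * f₁y t y v + action a b f₁ x * f₂y t y v)
        (fun t y v => action a b f₂ x * f₁v t y v + action a b f₁ x * f₂v t y v) x η) 0 := by
  refine ((h₁.hasDerivAt_action_add_mul hab hx hη).mul
    (h₂.hasDerivAt_action_add_mul hab hx hη)).congr_deriv ?_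
  simp only [firstVariation, zero_mul, add_zero]
  rw [mul_comm, ← intervalIntegral.integral_const_mul, ← intervalIntegral.integral_const_mul,
    ← intervalIntegral.integral_add ((h₁.intervalIntegrable_firstVariation hab hx hη).const_mul _)
      ((h₂.intervalIntegrable_firstVariation hab hx hη).const_mul _)]
  exact intervalIntegral.integral_congr fun t _ => by ring

theorem hasDerivWithinAt_of_firstVariation_eq_zero (hf : IsC1Lagrangian a b f fy fv)
    (hab : a < b) (hx : ContDiffOn ℝ 1 x (Icc a b))
    (H : ∀ η : ℝ → ℝ, ContDiffOn ℝ 1 η (Icc a b) → η a = 0 → η b = 0 →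
      firstVariation a b fy fv x η = 0) :
    ∀ t ∈ Icc a b, HasDerivWithinAt (fun s => fv s (x s) (derivWithin x (Icc a b) s))
      (fy t (x t) (derivWithin x (Icc a b) t)) (Icc a b) t :=
  have hx' := hx.continuousOn_derivWithin (uniqueDiffOn_Icc hab) le_rfl
  ContinuousOn.hasDerivWithinAt_of_integral_mul_add_mul_derivWithin_eq_zero hab
    (hf.continuousOn_y.comp_curve continuousOn_id (mapsTo_id _) hx.continuousOn hx')
    (hf.continuousOn_v.comp_curve continuousOn_id (mapsTo_id _) hx.continuousOn hx') H

end IsC1Lagrangian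

/-- Euler–Lagrange equation for the product functional
`L[x] = F₁[x] · F₂[x]` with both endpoints fixed. -/
theorem product_euler_lagrange
    (a b : ℝ) (hab : a < b)
    (f1 f1y f1v f2 f2y f2v : ℝ → ℝ → ℝ → ℝ)
    (hf1_cont : ContinuousOn (fun p : ℝ × ℝ × ℝ => f1 p.1 p.2.1 p.2.2)
      (Set.Icc a b ×ˢ (Set.univ : Set ℝ) ×ˢ (Set.univ : Set ℝ)))
    (hf2_cont : ContinuousOn (fun p : ℝ × ℝ × ℝ => f2 p.1 p.2.1 p.2.2)
      (Set.Icc a b ×ˢ (Set.univ : Set ℝ) ×ˢ (Set.univ : Set ℝ)))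
    (hf1y : ∀ t ∈ Set.Icc a b, ∀ y v : ℝ,
      HasDerivAt (fun y' => f1 t y' v) (f1y t y v) y)
    (hf1v : ∀ t ∈ Set.Icc a b, ∀ y v : ℝ,
      HasDerivAt (fun v' => f1 t y v') (f1v t y v) v)
    (hf2y : ∀ t ∈ Set.Icc a b, ∀ y v : ℝ,
      HasDerivAt (fun y' => f2 t y' v) (f2y t y v) y)
    (hf2v : ∀ t ∈ Set.Icc a b, ∀ y v : ℝ,
      HasDerivAt (fun v' => f2 t y v') (f2v t y v) v)
    (hf1y_cont : ContinuousOn (fun p : ℝ × ℝ × ℝ => f1y p.1 p.2.1 p.2.2)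
      (Set.Icc a b ×ˢ (Set.univ : Set ℝ) ×ˢ (Set.univ : Set ℝ)))
    (hf1v_cont : ContinuousOn (fun p : ℝ × ℝ × ℝ => f1v p.1 p.2.1 p.2.2)
      (Set.Icc a b ×ˢ (Set.univ : Set ℝ) ×ˢ (Set.univ : Set ℝ)))
    (hf2y_cont : ContinuousOn (fun p : ℝ × ℝ × ℝ => f2y p.1 p.2.1 p.2.2)
      (Set.Icc a b ×ˢ (Set.univ : Set ℝ) ×ˢ (Set.univ : Set ℝ)))
    (hf2v_cont : ContinuousOn (fun p : ℝ × ℝ × ℝ => f2v p.1 p.2.1 p.2.2)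
      (Set.Icc a b ×ˢ (Set.univ : Set ℝ) ×ˢ (Set.univ : Set ℝ)))
    (xa xb : ℝ) (xE : ℝ → ℝ)
    (hxE : ContDiffOn ℝ 1 xE (Set.Icc a b))
    (hxEa : xE a = xa) (hxEb : xE b = xb)
    (hdiff1 : ∀ t ∈ Set.Icc a b,
      DifferentiableWithinAt ℝ
        (fun s => f1v s (xE s) (derivWithin xE (Set.Icc a b) s)) (Set.Icc a b) t)
    (hdiff2 : ∀ t ∈ Set.Icc a b,
      DifferentiableWithinAt ℝ
        (fun s => f2v s (xE s) (derivWithin xE (Set.Icc a b) s)) (Set.Icc a b) t)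
    (F1 F2 : (ℝ → ℝ) → ℝ)
    (hF1 : ∀ x, F1 x = ∫ t in a..b, f1 t (x t) (derivWithin x (Set.Icc a b) t))
    (hF2 : ∀ x, F2 x = ∫ t in a..b, f2 t (x t) (derivWithin x (Set.Icc a b) t))
    (L : (ℝ → ℝ) → ℝ)
    (hL : ∀ x, L x = F1 x * F2 x)
    (hext :
      (∃ δ > 0, ∀ x : ℝ → ℝ, ContDiffOn ℝ 1 x (Set.Icc a b) →
        x a = xa → x b = xb → C1Norm a b (fun t => x t - xE t) < δ → L xE ≤ L x) ∨
      (∃ δ > 0, ∀ x : ℝ → ℝ, ContDiffOn ℝ 1 x (Set.Icc a b) →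
        x a = xa → x b = xb → C1Norm a b (fun t => x t - xE t) < δ → L x ≤ L xE)) :
    ∀ t ∈ Set.Icc a b,
      F2 xE * (f1y t (xE t) (derivWithin xE (Set.Icc a b) t) -
          derivWithin (fun s => f1v s (xE s) (derivWithin xE (Set.Icc a b) s))
            (Set.Icc a b) t) +
      F1 xE * (f2y t (xE t) (derivWithin xE (Set.Icc a b) t) -
          derivWithin (fun s => f2v s (xE s) (derivWithin xE (Set.Icc a b) s))
            (Set.Icc a b) t) = 0 := by
  obtain rfl : F1 = action a b f1 := funext hF1
  obtain rfl : F2 = action a b f2 := funext hF2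
  obtain rfl : L = fun x => action a b f1 x * action a b f2 x := funext hL
  subst hxEa hxEb
  have h₁ : IsC1Lagrangian a b f1 f1y f1v := ⟨hf1_cont, hf1y, hf1v, hf1y_cont, hf1v_cont⟩
  have h₂ : IsC1Lagrangian a b f2 f2y f2v := ⟨hf2_cont, hf2y, hf2v, hf2y_cont, hf2v_cont⟩
  have hg := h₁.const_mul_add h₂ (action a b f2 xE) (action a b f1 xE)
  have hEL := hg.hasDerivWithinAt_of_firstVariation_eq_zero hab hxE fun η hη hηa hηb =>
    (isLocalExtr_comp_add_mul (L := fun x => action a b f1 x * action a b f2 x)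
      hxE hη hηa hηb hext).hasDerivAt_eq_zero (h₁.hasDerivAt_action_mul_action h₂ hab hxE hη)
  intro t ht
  have hcomb := ((hdiff1 t ht).hasDerivWithinAt.const_mul (action a b f2 xE)).add
    ((hdiff2 t ht).hasDerivWithinAt.const_mul (action a b f1 xE))
  linear_combination (uniqueDiffOn_Icc hab t ht).eq_deriv _ (hEL t ht) hcomb
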